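/- For every integer n ≥ 1 and all real s, t, the integral over [0,1] of the product αₙ(s,t,θ) = Π_{j=1}^n (1 + i·s·sin(2π·8^j·θ)/√n) · Π_{j=1}^n (1 + i·t·cos(2π·8^j·θ)/√n) equals 1, i.e. ∫₀¹ αₙ(s,t,θ) dθ = 1. -/

import Mathlib

open MeasureTheory
open scoped Real

/-- `αₙ(s,t,θ) = Π_{j=1}^n (1 + i·s·sin(2π·8^j·θ)/√n) · Π_{j=1}^n (1 + i·t·cos(2π·8^j·θ)/√n)`. -/
noncomputable def lacunaryProd (n : ℕ) (s t θ : ℝ) : ℂ :=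
  (∏ j ∈ Finset.Icc 1 n, (1 + Complex.I * s * Real.sin (2 * π * 8 ^ j * θ) / Real.sqrt n)) *
  (∏ j ∈ Finset.Icc 1 n, (1 + Complex.I * t * Real.cos (2 * π * 8 ^ j * θ) / Real.sqrt n))

/-!
Each pair of factors at frequency `8 ^ j` is a trigonometric polynomial
`∑_{|d| ≤ 2} c_d e(d 8^j θ)` with constant coefficient `1`: the cross terms of the sine and cosine
parts cancel. Expanding the product, a term has frequency `∑ d_j 8^j`, which vanishes only if all
`d_j = 0`, because signed base-`8` digits of size less than `8` represent `0` uniquely. Hence the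
integral over a period is the product of the constant coefficients, namely `1`.
-/

open Complex Finset

noncomputable def fourierExp (k : ℤ) (θ : ℝ) : ℂ := exp (2 * π * I * k * θ)

lemma fourierExp_sum {ι : Type*} (s : Finset ι) (k : ι → ℤ) (θ : ℝ) :
    fourierExp (∑ i ∈ s, k i) θ = ∏ i ∈ s, fourierExp (k i) θ := by
  simp only [fourierExp, ← exp_sum]
  push_cast
  rw [mul_sum, sum_mul]

lemma fourierExp_add (k l : ℤ) (θ : ℝ) : fourierExp (k + l) θ = fourierExp k θ * fourierExp l θ := by
  rw [fourierExp, fourierExp, fourierExp, ← exp_add]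
  push_cast
  ring_nf

@[simp]
lemma fourierExp_zero (θ : ℝ) : fourierExp 0 θ = 1 := by simp [fourierExp]

lemma continuous_fourierExp (k : ℤ) : Continuous (fourierExp k) := by
  unfold fourierExp; fun_prop

lemma integral_fourierExp (k : ℤ) :
    ∫ θ in (0:ℝ)..1, fourierExp k θ = if k = 0 then 1 else 0 := by
  split_ifs with hk
  · simp [fourierExp, hk]
  · have hc : 2 * π * I * k ≠ 0 := by simp [Real.pi_ne_zero, hk]
    have hperiod : exp (2 * π * I * k) = 1 := by
      simpa [mul_comm, mul_left_comm, mul_assoc] using exp_int_mul_two_pi_mul_I k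
    simp [fourierExp, integral_exp_mul_complex hc, hperiod]

lemma fourierExp_eq_exp_mul_I (k : ℤ) (θ : ℝ) :
    fourierExp k θ = exp (↑(2 * π * k * θ) * I) := by
  rw [fourierExp]; push_cast; ring_nf

lemma fourierExp_neg_eq_exp_neg_mul_I (k : ℤ) (θ : ℝ) :
    fourierExp (-k) θ = exp (-↑(2 * π * k * θ) * I) := by
  rw [fourierExp]; push_cast; ring_nf

lemma ofReal_sin_eq_fourierExp (k : ℤ) (θ : ℝ) :
    (Real.sin (2 * π * k * θ) : ℂ) = I * (fourierExp (-k) θ - fourierExp k θ) / 2 := by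
  rw [eq_div_iff two_ne_zero, ofReal_sin, fourierExp_neg_eq_exp_neg_mul_I, fourierExp_eq_exp_mul_I]
  linear_combination two_sin ((2 * π * k * θ : ℝ) : ℂ)

lemma ofReal_cos_eq_fourierExp (k : ℤ) (θ : ℝ) :
    (Real.cos (2 * π * k * θ) : ℂ) = (fourierExp k θ + fourierExp (-k) θ) / 2 := by
  rw [eq_div_iff two_ne_zero, ofReal_cos, fourierExp_neg_eq_exp_neg_mul_I,
    fourierExp_eq_exp_mul_I, mul_comm, two_cos]

theorem eq_zero_of_sum_mul_pow_eq_zero {b : ℤ} : ∀ {m : ℕ} {ε : Fin m → ℤ},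
    (∀ i, |ε i| < b) → ∑ i, ε i * b ^ (i : ℕ) = 0 → ε = 0
  | 0, _, _, _ => Subsingleton.elim _ _
  | m + 1, ε, hε, hsum => by
    have hb : b ≠ 0 := (lt_of_le_of_lt (abs_nonneg _) (hε 0)).ne'
    rw [Fin.sum_univ_succ] at hsum
    have hsplit : ε 0 + b * ∑ i : Fin m, ε i.succ * b ^ (i : ℕ) = 0 := by
      simpa [pow_succ, mul_sum, mul_comm, mul_left_comm, mul_assoc] using hsum
    have h0 : ε 0 = 0 :=
      Int.eq_zero_of_abs_lt_dvd ⟨-∑ i : Fin m, ε i.succ * b ^ (i : ℕ), by linarith⟩ (hε 0)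
    have htail : ε ∘ Fin.succ = 0 :=
      eq_zero_of_sum_mul_pow_eq_zero (fun i => hε i.succ)
        (by simpa [h0, hb] using hsplit)
    funext i
    exact Fin.cases h0 (fun j => congrFun htail j) i

/-- The coefficients of the Laurent polynomial `(1 + σ (u - u⁻¹)) (1 + τ (u + u⁻¹))`. -/
noncomputable def pairCoeff (σ τ : ℂ) (d : ℤ) : ℂ :=
  if d = 0 then 1
  else if d = 1 then σ + τ
  else if d = -1 then τ - σ
  else if d = 2 then σ * τ
  else if d = -2 then -(σ * τ)
  else 0

lemma one_add_sin_mul_one_add_cos_eq_sum (s t r : ℝ) (k : ℤ) (θ : ℝ) :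
    (1 + I * s * Real.sin (2 * π * k * θ) / r) * (1 + I * t * Real.cos (2 * π * k * θ) / r) =
      ∑ d ∈ Icc (-2 : ℤ) 2, pairCoeff (s / (2 * r)) (I * t / (2 * r)) d * fourierExp (d * k) θ := by
  have hIcc : Icc (-2 : ℤ) 2 = {-2, -1, 0, 1, 2} := by decide
  have hsq (l : ℤ) : fourierExp (2 * l) θ = fourierExp l θ * fourierExp l θ := by
    rw [two_mul, fourierExp_add]
  rw [ofReal_sin_eq_fourierExp, ofReal_cos_eq_fourierExp, hIcc]
  norm_num [pairCoeff]
  rw [show -(2 * k) = 2 * -k by ring, hsq, hsq]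
  linear_combination (s / (2 * r) * (fourierExp (-k) θ - fourierExp k θ) *
    (1 + I * t / (2 * r) * (fourierExp k θ + fourierExp (-k) θ))) * I_sq

theorem integral_prod_sum_fourierExp_of_dissociated {ι : Type*} [Fintype ι] [DecidableEq ι]
    {D : Finset ℤ} (hD : 0 ∈ D) {freq : ι → ℤ}
    (hfreq : ∀ ε : ι → ℤ, (∀ i, ε i ∈ D) → ∑ i, ε i * freq i = 0 → ε = 0) (a : ι → ℤ → ℂ) :
    ∫ θ in (0:ℝ)..1, ∏ i, ∑ d ∈ D, a i d * fourierExp (d * freq i) θ = ∏ i, a i 0 := by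
  have hexpand (θ : ℝ) : ∏ i, ∑ d ∈ D, a i d * fourierExp (d * freq i) θ =
      ∑ ε ∈ Fintype.piFinset fun _ => D,
        (∏ i, a i (ε i)) * fourierExp (∑ i, ε i * freq i) θ := by
    simp only [prod_univ_sum, fourierExp_sum, prod_mul_distrib]
  simp_rw [hexpand]
  rw [intervalIntegral.integral_finsetSum fun ε _ => by
    exact (continuous_const.mul (continuous_fourierExp _)).intervalIntegrable _ _]
  simp_rw [intervalIntegral.integral_const_mul, integral_fourierExp]
  rw [sum_eq_single 0 (fun ε hε hne => ?_)
    (fun h => absurd (Fintype.mem_piFinset.mpr fun _ => hD) h)]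
  · simp
  · rw [Fintype.mem_piFinset] at hε
    simp [mt (hfreq ε hε) hne]

lemma lacunaryProd_eq_prod_sum (n : ℕ) (s t θ : ℝ) :
    lacunaryProd n s t θ = ∏ i : Fin n, ∑ d ∈ Icc (-2 : ℤ) 2,
      pairCoeff (s / (2 * √n)) (I * t / (2 * √n)) d * fourierExp (d * 8 ^ (1 + (i : ℕ))) θ := by
  rw [lacunaryProd, ← prod_mul_distrib, ← Ico_add_one_right_eq_Icc, prod_Ico_eq_prod_range,
    add_tsub_cancel_right, ← Fin.prod_univ_eq_prod_range]
  refine prod_congr rfl fun i _ => ?_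
  simpa using one_add_sin_mul_one_add_cos_eq_sum s t √n (8 ^ (1 + (i : ℕ))) θ

theorem integral_lacunaryProd_eq_one (n : ℕ) (s t : ℝ) :
    ∫ θ in (0:ℝ)..1, lacunaryProd n s t θ = 1 := by
  have hdissociated (ε : Fin n → ℤ) (hε : ∀ i, ε i ∈ Icc (-2 : ℤ) 2)
      (hsum : ∑ i, ε i * 8 ^ (1 + (i : ℕ)) = 0) : ε = 0 := by
    refine eq_zero_of_sum_mul_pow_eq_zero (b := 8) (fun i => ?_) ?_
    · have := mem_Icc.mp (hε i)
      rw [abs_lt]; omega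
    · simp_rw [pow_add, pow_one, mul_left_comm _ (8 : ℤ), ← mul_sum] at hsum
      simpa using hsum
  simp_rw [lacunaryProd_eq_prod_sum]
  rw [integral_prod_sum_fourierExp_of_dissociated (by simp) hdissociated]
  simp [pairCoeff]
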